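/- arXiv:2207.04621 — 2 statements merged into one kernel-verified Lean document; each statement's English description precedes it below -/
import Mathlib

section
/- Assume Σ, Ψ : [x₀,∞) → (0,∞) are continuous with cu ≤ Ψ(u) and Σ(u) ≤ Cu² for all u ≥ x₀, where 0 < c, C < ∞. With Q, φ as before (Q(u) = ∫_{x₀}^u Ψ/Σ, φ(u) = ∫_u^∞ e^{−Q}/Σ, assumed finite, Q nondecreasing to ∞), one has, for all x ≥ x₀: (1 + C/c) ∫_{x₀}^x φ(u)e^{Q(u)} du ≥ ∫_{x₀}^x du/Ψ(u) − (C/c)·φ(x₀)·x₀. Consequently, if ∫_{x₀}^∞ φ(u)e^{Q(u)} du < ∞ then ∫_{x₀}^∞ du/Ψ(u) < ∞. -/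
/-!
Write `g = φ e^Q`. Then `g' = (Ψ g - 1)/Σ`, and `Ψ g ≤ 1`: since `Ψ` is nondecreasing,
`Ψ(u) φ(u) ≤ ∫_u^∞ (Ψ/Σ) e^{-Q} = e^{-Q(u)}`. The growth bounds give `Σ(u) ≤ (C/c) u Ψ(u)`, so
`1/Ψ - g = (1 - Ψ g)/Ψ ≤ (C/c) u (1 - Ψ g)/Σ = -(C/c) u g'`. Integrating, and integrating
`u g'` by parts, yields the inequality after dropping the boundary term `-(C/c) x g(x) ≤ 0`;
letting `x → ∞` gives the integrability of `1/Ψ`.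
-/

open Set MeasureTheory Filter

/-- `Q(u) := ∫_{x₀}^u Ψ/Σ` -/
noncomputable def Qf (Sig Psi : ℝ → ℝ) (x₀ u : ℝ) : ℝ := ∫ v in x₀..u, Psi v / Sig v

/-- `φ(u) := ∫_u^∞ (1/Σ(x)) e^{−Q(x)} dx` -/
noncomputable def phif (Sig Psi : ℝ → ℝ) (x₀ u : ℝ) : ℝ :=
  ∫ x in Set.Ioi u, (1 / Sig x) * Real.exp (-(Qf Sig Psi x₀ x))

open scoped Topology

lemma continuousOn_primitive_Ici {f : ℝ → ℝ} {a : ℝ} (hf : ContinuousOn f (Ici a)) :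
    ContinuousOn (fun x => ∫ t in a..x, f t) (Ici a) := by
  intro x hx
  have hax : a ≤ x + 1 := by linarith [mem_Ici.1 hx]
  have hprim := intervalIntegral.continuousOn_primitive_interval'
    ((hf.mono Icc_subset_Ici_self).intervalIntegrable_of_Icc (μ := volume) hax) left_mem_uIcc
  rw [uIcc_of_le hax] at hprim
  refine (hprim x ⟨hx, by linarith⟩).mono_of_mem_nhdsWithin ?_
  rw [← Ici_inter_Iic]
  exact inter_mem_nhdsWithin _ (Iic_mem_nhds (by linarith))

lemma hasDerivAt_primitive_of_continuousOn_Ici {f : ℝ → ℝ} {a x : ℝ}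
    (hf : ContinuousOn f (Ici a)) (hx : a < x) :
    HasDerivAt (fun y => ∫ t in a..y, f t) (f x) x :=
  intervalIntegral.integral_hasDerivAt_right
    ((hf.mono Icc_subset_Ici_self).intervalIntegrable_of_Icc hx.le)
    ((hf.mono Ioi_subset_Ici_self).stronglyMeasurableAtFilter isOpen_Ioi x hx)
    (hf.continuousAt (Ici_mem_nhds hx))

lemma integrableOn_Ioi_mul_exp_neg_and_integral_eq {Q q : ℝ → ℝ} {a : ℝ}
    (hcont : ContinuousWithinAt Q (Ici a) a) (hderiv : ∀ x ∈ Ioi a, HasDerivAt Q (q x) x)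
    (hq : ∀ x ∈ Ioi a, 0 ≤ q x) (hlim : Tendsto Q atTop atTop) :
    IntegrableOn (fun x => q x * Real.exp (-Q x)) (Ioi a) ∧
      ∫ x in Ioi a, q x * Real.exp (-Q x) = Real.exp (-Q a) := by
  have hG : ∀ x ∈ Ioi a, HasDerivAt (fun y => -Real.exp (-Q y)) (q x * Real.exp (-Q x)) x :=
    fun x hx => by simpa [mul_comm] using ((hderiv x hx).fun_neg.exp).fun_neg
  have hGcont : ContinuousWithinAt (fun y => -Real.exp (-Q y)) (Ici a) a :=
    hcont.neg.rexp.neg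
  have hGlim : Tendsto (fun y => -Real.exp (-Q y)) atTop (𝓝 0) := by
    simpa using (Real.tendsto_exp_atBot.comp (tendsto_neg_atBot_iff.2 hlim)).neg
  have hint := integrableOn_Ioi_deriv_of_nonneg hGcont hG
    (fun x hx => mul_nonneg (hq x hx) (Real.exp_nonneg _)) hGlim
  refine ⟨hint, ?_⟩
  rw [integral_Ioi_of_hasDerivAt_of_tendsto hGcont hG hint hGlim]
  ring

lemma integral_le_of_le_sub_mul_deriv {r g g' : ℝ → ℝ} {a b κ : ℝ} (hab : a ≤ b)
    (hr : ContinuousOn r (Icc a b)) (hg : ContinuousOn g (Icc a b))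
    (hg' : ∀ y ∈ Ioo a b, HasDerivAt g (g' y) y)
    (hbound : ∀ y ∈ Ioo a b, r y ≤ g y - κ * y * g' y) :
    ∫ u in a..b, r u ≤ (1 + κ) * (∫ u in a..b, g u) + κ * (a * g a - b * g b) := by
  set H : ℝ → ℝ := fun y => (1 + κ) * (∫ u in a..y, g u) - κ * (y * g y)
  have hprim := intervalIntegral.continuousOn_primitive_interval'
    (hg.intervalIntegrable_of_Icc (μ := volume) hab) left_mem_uIcc
  rw [uIcc_of_le hab] at hprim
  have hHcont : ContinuousOn H (Icc a b) :=
    (continuousOn_const.mul hprim).sub (continuousOn_const.mul (continuousOn_id.mul hg))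
  have hH : ∀ y ∈ Ioo a b, HasDerivAt H (g y - κ * y * g' y) y := by
    intro y hy
    have hIcc : Icc a b ∈ 𝓝 y := Icc_mem_nhds hy.1 hy.2
    have hprim' : HasDerivAt (fun z => ∫ u in a..z, g u) (g y) y :=
      intervalIntegral.integral_hasDerivAt_right
        ((hg.mono (Icc_subset_Icc_right hy.2.le)).intervalIntegrable_of_Icc hy.1.le)
        (hg.stronglyMeasurableAtFilter_nhdsWithin measurableSet_Icc y |>.filter_mono
          (le_of_eq (nhdsWithin_eq_nhds.2 hIcc).symm))
        (hg.continuousAt hIcc)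
    exact ((hprim'.const_mul (1 + κ)).fun_sub
      (((hasDerivAt_id' y).fun_mul (hg' y hy)).const_mul κ)).congr_deriv (by ring)
  have := intervalIntegral.integral_le_sub_of_hasDeriv_right_of_le hab hHcont
    (fun y hy => (hH y hy).hasDerivWithinAt) hr.integrableOn_Icc hbound
  simp only [H, intervalIntegral.integral_same, mul_zero, zero_sub] at this
  linarith

lemma integrableOn_Ioi_of_intervalIntegral_le {f : ℝ → ℝ} {a M : ℝ}
    (hf : ContinuousOn f (Ici a)) (hnonneg : ∀ x ∈ Ioi a, 0 ≤ f x)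
    (hbound : ∀ x ≥ a, ∫ u in a..x, f u ≤ M) : IntegrableOn f (Ioi a) := by
  refine integrableOn_Ioi_of_intervalIntegral_norm_bounded M a (fun x => ?_) tendsto_id
    (eventually_ge_atTop a |>.mono fun x hx => ?_)
  · rcases le_or_gt x a with h | h
    · simp [Ioc_eq_empty (not_lt.2 h)]
    · exact (hf.mono Icc_subset_Ici_self).integrableOn_Icc.mono_set Ioc_subset_Icc_self
  · refine le_of_eq_of_le ?_ (hbound x hx)
    rw [id, intervalIntegral.integral_of_le hx, intervalIntegral.integral_of_le hx]
    exact setIntegral_congr_fun measurableSet_Ioc fun u hu =>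
      Real.norm_of_nonneg (hnonneg u hu.1)

lemma one_div_le_sub_mul_div {p s g κ y : ℝ} (hp : 0 < p) (hs : 0 < s) (hpg : p * g ≤ 1)
    (hsp : s ≤ κ * y * p) : 1 / p ≤ g - κ * y * ((p * g - 1) / s) := by
  have key : g - κ * y * ((p * g - 1) / s) - 1 / p = (1 - p * g) * (κ * y * p - s) / (p * s) := by
    field_simp
    ring
  rw [← sub_nonneg, key]
  exact div_nonneg (mul_nonneg (by linarith) (by linarith)) (by positivity)

lemma intervalIntegral_le_integral_Ioi {f : ℝ → ℝ} {a b : ℝ} (hf : IntegrableOn f (Ioi a))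
    (hnonneg : ∀ x ∈ Ioi a, 0 ≤ f x) (hab : a ≤ b) : ∫ x in a..b, f x ≤ ∫ x in Ioi a, f x := by
  rw [intervalIntegral.integral_of_le hab]
  exact setIntegral_mono_set hf ((ae_restrict_iff' measurableSet_Ioi).2 (ae_of_all _ hnonneg))
    Ioc_subset_Ioi_self.eventuallyLE

section

variable {Sig Psi : ℝ → ℝ} {x₀ : ℝ}

lemma continuousOn_Qf (hScont : ContinuousOn Sig (Ici x₀)) (hPcont : ContinuousOn Psi (Ici x₀))
    (hSpos : ∀ x ≥ x₀, 0 < Sig x) : ContinuousOn (Qf Sig Psi x₀) (Ici x₀) :=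
  continuousOn_primitive_Ici (hPcont.div hScont fun x hx => (hSpos x hx).ne')

lemma hasDerivAt_Qf (hScont : ContinuousOn Sig (Ici x₀)) (hPcont : ContinuousOn Psi (Ici x₀))
    (hSpos : ∀ x ≥ x₀, 0 < Sig x) {u : ℝ} (hu : x₀ < u) :
    HasDerivAt (Qf Sig Psi x₀) (Psi u / Sig u) u :=
  hasDerivAt_primitive_of_continuousOn_Ici (hPcont.div hScont fun x hx => (hSpos x hx).ne') hu

lemma continuousOn_one_div_mul_exp_neg_Qf (hScont : ContinuousOn Sig (Ici x₀))
    (hPcont : ContinuousOn Psi (Ici x₀)) (hSpos : ∀ x ≥ x₀, 0 < Sig x) :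
    ContinuousOn (fun x => 1 / Sig x * Real.exp (-Qf Sig Psi x₀ x)) (Ici x₀) :=
  (continuousOn_const.div hScont fun x hx => (hSpos x hx).ne').mul
    (continuousOn_Qf hScont hPcont hSpos).neg.rexp

lemma phif_eq_sub_integral
    (hφ : IntegrableOn (fun x => 1 / Sig x * Real.exp (-Qf Sig Psi x₀ x)) (Ioi x₀))
    {u : ℝ} (hu : x₀ ≤ u) :
    phif Sig Psi x₀ u =
      phif Sig Psi x₀ x₀ - ∫ x in x₀..u, 1 / Sig x * Real.exp (-Qf Sig Psi x₀ x) := by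
  rw [← intervalIntegral.integral_Ioi_sub_Ioi hφ hu, phif, phif]
  ring

lemma continuousOn_phif (hScont : ContinuousOn Sig (Ici x₀)) (hPcont : ContinuousOn Psi (Ici x₀))
    (hSpos : ∀ x ≥ x₀, 0 < Sig x)
    (hφ : IntegrableOn (fun x => 1 / Sig x * Real.exp (-Qf Sig Psi x₀ x)) (Ioi x₀)) :
    ContinuousOn (phif Sig Psi x₀) (Ici x₀) :=
  (continuousOn_const.sub (continuousOn_primitive_Ici
    (continuousOn_one_div_mul_exp_neg_Qf hScont hPcont hSpos))).congr
    fun _ hu => phif_eq_sub_integral hφ hu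

lemma hasDerivAt_phif (hScont : ContinuousOn Sig (Ici x₀)) (hPcont : ContinuousOn Psi (Ici x₀))
    (hSpos : ∀ x ≥ x₀, 0 < Sig x)
    (hφ : IntegrableOn (fun x => 1 / Sig x * Real.exp (-Qf Sig Psi x₀ x)) (Ioi x₀))
    {u : ℝ} (hu : x₀ < u) :
    HasDerivAt (phif Sig Psi x₀) (-(1 / Sig u * Real.exp (-Qf Sig Psi x₀ u))) u := by
  have hprim := hasDerivAt_primitive_of_continuousOn_Ici
    (continuousOn_one_div_mul_exp_neg_Qf hScont hPcont hSpos) hu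
  refine (hprim.const_sub (phif Sig Psi x₀ x₀)).congr_of_eventuallyEq ?_
  filter_upwards [Ioi_mem_nhds hu] with v hv
  exact phif_eq_sub_integral hφ hv.out.le

lemma phif_nonneg (hSpos : ∀ x ≥ x₀, 0 < Sig x) {u : ℝ} (hu : x₀ ≤ u) :
    0 ≤ phif Sig Psi x₀ u :=
  setIntegral_nonneg measurableSet_Ioi fun x hx =>
    mul_nonneg (one_div_nonneg.2 (hSpos x (hu.trans hx.out.le)).le) (Real.exp_nonneg _)

lemma mul_phif_le_exp_neg_Qf (hScont : ContinuousOn Sig (Ici x₀))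
    (hPcont : ContinuousOn Psi (Ici x₀)) (hSpos : ∀ x ≥ x₀, 0 < Sig x)
    (hPpos : ∀ x ≥ x₀, 0 < Psi x) (hPmono : MonotoneOn Psi (Ici x₀))
    (hQ : Tendsto (Qf Sig Psi x₀) atTop atTop)
    (hφ : IntegrableOn (fun x => 1 / Sig x * Real.exp (-Qf Sig Psi x₀ x)) (Ioi x₀))
    {u : ℝ} (hu : x₀ ≤ u) :
    Psi u * phif Sig Psi x₀ u ≤ Real.exp (-Qf Sig Psi x₀ u) := by
  obtain ⟨hint, hval⟩ := integrableOn_Ioi_mul_exp_neg_and_integral_eq (q := fun x => Psi x / Sig x)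
    ((continuousOn_Qf hScont hPcont hSpos).mono (Ici_subset_Ici.2 hu) u self_mem_Ici)
    (fun x hx => hasDerivAt_Qf hScont hPcont hSpos (hu.trans_lt hx))
    (fun x hx => div_nonneg (hPpos x (hu.trans hx.out.le)).le (hSpos x (hu.trans hx.out.le)).le)
    hQ
  rw [← hval, phif, ← integral_const_mul]
  refine setIntegral_mono_on ((hφ.mono_set (Ioi_subset_Ioi hu)).const_mul _) hint
    measurableSet_Ioi fun x hx => ?_
  have hx₀x : x₀ ≤ x := hu.trans hx.out.le
  calc Psi u * (1 / Sig x * Real.exp (-Qf Sig Psi x₀ x))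
      ≤ Psi x * (1 / Sig x * Real.exp (-Qf Sig Psi x₀ x)) :=
        mul_le_mul_of_nonneg_right (hPmono hu hx₀x hx.out.le)
          (mul_nonneg (one_div_nonneg.2 (hSpos x hx₀x).le) (Real.exp_nonneg _))
    _ = Psi x / Sig x * Real.exp (-Qf Sig Psi x₀ x) := by ring

lemma hasDerivAt_phif_mul_exp_Qf (hScont : ContinuousOn Sig (Ici x₀))
    (hPcont : ContinuousOn Psi (Ici x₀)) (hSpos : ∀ x ≥ x₀, 0 < Sig x)
    (hφ : IntegrableOn (fun x => 1 / Sig x * Real.exp (-Qf Sig Psi x₀ x)) (Ioi x₀))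
    {u : ℝ} (hu : x₀ < u) :
    HasDerivAt (fun v => phif Sig Psi x₀ v * Real.exp (Qf Sig Psi x₀ v))
      ((Psi u * (phif Sig Psi x₀ u * Real.exp (Qf Sig Psi x₀ u)) - 1) / Sig u) u := by
  have hS : Sig u ≠ 0 := (hSpos u hu.le).ne'
  refine ((hasDerivAt_phif hScont hPcont hSpos hφ hu).mul
    (hasDerivAt_Qf hScont hPcont hSpos hu).exp).congr_deriv ?_
  rw [Real.exp_neg]
  field_simp
  ring

lemma mul_phif_mul_exp_Qf_le_one (hScont : ContinuousOn Sig (Ici x₀))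
    (hPcont : ContinuousOn Psi (Ici x₀)) (hSpos : ∀ x ≥ x₀, 0 < Sig x)
    (hPpos : ∀ x ≥ x₀, 0 < Psi x) (hPmono : MonotoneOn Psi (Ici x₀))
    (hQ : Tendsto (Qf Sig Psi x₀) atTop atTop)
    (hφ : IntegrableOn (fun x => 1 / Sig x * Real.exp (-Qf Sig Psi x₀ x)) (Ioi x₀))
    {u : ℝ} (hu : x₀ ≤ u) :
    Psi u * (phif Sig Psi x₀ u * Real.exp (Qf Sig Psi x₀ u)) ≤ 1 :=
  calc Psi u * (phif Sig Psi x₀ u * Real.exp (Qf Sig Psi x₀ u))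
      = Psi u * phif Sig Psi x₀ u * Real.exp (Qf Sig Psi x₀ u) := by ring
    _ ≤ Real.exp (-Qf Sig Psi x₀ u) * Real.exp (Qf Sig Psi x₀ u) :=
        mul_le_mul_of_nonneg_right
          (mul_phif_le_exp_neg_Qf hScont hPcont hSpos hPpos hPmono hQ hφ hu) (Real.exp_nonneg _)
    _ = 1 := by rw [← Real.exp_add, neg_add_cancel, Real.exp_zero]

lemma integral_one_div_Psi_le {c C : ℝ} (hx₀ : 0 < x₀) (hc : 0 < c) (hC : 0 < C)
    (hScont : ContinuousOn Sig (Ici x₀)) (hPcont : ContinuousOn Psi (Ici x₀))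
    (hSpos : ∀ x ≥ x₀, 0 < Sig x) (hPpos : ∀ x ≥ x₀, 0 < Psi x)
    (hPmono : MonotoneOn Psi (Ici x₀))
    (hlow : ∀ u ≥ x₀, c * u ≤ Psi u) (hupp : ∀ u ≥ x₀, Sig u ≤ C * u ^ 2)
    (hQ : Tendsto (Qf Sig Psi x₀) atTop atTop)
    (hφ : IntegrableOn (fun x => 1 / Sig x * Real.exp (-Qf Sig Psi x₀ x)) (Ioi x₀))
    {x : ℝ} (hx : x₀ ≤ x) :
    ∫ u in x₀..x, 1 / Psi u ≤
      (1 + C / c) * (∫ u in x₀..x, phif Sig Psi x₀ u * Real.exp (Qf Sig Psi x₀ u)) +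
        C / c * phif Sig Psi x₀ x₀ * x₀ := by
  set g : ℝ → ℝ := fun v => phif Sig Psi x₀ v * Real.exp (Qf Sig Psi x₀ v)
  have hgcont : ContinuousOn g (Ici x₀) :=
    (continuousOn_phif hScont hPcont hSpos hφ).mul (continuousOn_Qf hScont hPcont hSpos).rexp
  have hSig_le : ∀ y > x₀, Sig y ≤ C / c * y * Psi y := fun y hy => calc
    Sig y ≤ C * y ^ 2 := hupp y hy.le
    _ = C / c * y * (c * y) := by field_simp
    _ ≤ C / c * y * Psi y := by
      gcongr
      · have := hx₀.trans hy; positivity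
      · exact hlow y hy.le
  have hIBP := integral_le_of_le_sub_mul_deriv (r := fun u => 1 / Psi u) hx
    ((continuousOn_const.div hPcont fun y hy => (hPpos y hy).ne').mono Icc_subset_Ici_self)
    (hgcont.mono Icc_subset_Ici_self)
    (fun y hy => hasDerivAt_phif_mul_exp_Qf hScont hPcont hSpos hφ hy.1)
    (fun y hy => one_div_le_sub_mul_div (hPpos y hy.1.le) (hSpos y hy.1.le)
      (mul_phif_mul_exp_Qf_le_one hScont hPcont hSpos hPpos hPmono hQ hφ hy.1.le)
      (hSig_le y hy.1))
  have hgx₀ : g x₀ = phif Sig Psi x₀ x₀ := by simp [g, Qf]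
  have hgx : 0 ≤ C / c * (x * g x) := by
    have := phif_nonneg (Psi := Psi) hSpos hx
    have := hx₀.trans_le hx
    positivity
  rw [hgx₀] at hIBP
  linarith

end

theorem stmt8_general (Sig Psi : ℝ → ℝ) (x₀ c C : ℝ) (hx₀ : 0 < x₀) (hc : 0 < c) (hC : 0 < C)
    (hScont : ContinuousOn Sig (Ici x₀)) (hPcont : ContinuousOn Psi (Ici x₀))
    (hSpos : ∀ x ≥ x₀, 0 < Sig x) (hPpos : ∀ x ≥ x₀, 0 < Psi x)
    (hPmono : MonotoneOn Psi (Ici x₀))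
    (hlow : ∀ u ≥ x₀, c * u ≤ Psi u) (hupp : ∀ u ≥ x₀, Sig u ≤ C * u^2)
    (hQ : Tendsto (fun u => Qf Sig Psi x₀ u) atTop atTop)
    (hφ : IntegrableOn (fun x => (1 / Sig x) * Real.exp (-(Qf Sig Psi x₀ x))) (Ioi x₀)) :
    (∀ x ≥ x₀,
      (1 + C/c) * ∫ u in x₀..x, phif Sig Psi x₀ u * Real.exp (Qf Sig Psi x₀ u)
        ≥ (∫ u in x₀..x, 1 / Psi u) - (C/c) * phif Sig Psi x₀ x₀ * x₀) ∧
    (IntegrableOn (fun u => phif Sig Psi x₀ u * Real.exp (Qf Sig Psi x₀ u)) (Ioi x₀) →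
      IntegrableOn (fun u => 1 / Psi u) (Ioi x₀)) := by
  have hbound := fun x (hx : x ≥ x₀) =>
    integral_one_div_Psi_le hx₀ hc hC hScont hPcont hSpos hPpos hPmono hlow hupp hQ hφ hx
  refine ⟨fun x hx => by linarith [hbound x hx], fun hint => ?_⟩
  have hg_le : ∀ x ≥ x₀, ∫ u in x₀..x, phif Sig Psi x₀ u * Real.exp (Qf Sig Psi x₀ u) ≤
      ∫ u in Ioi x₀, phif Sig Psi x₀ u * Real.exp (Qf Sig Psi x₀ u) := fun x hx =>
    intervalIntegral_le_integral_Ioi hint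
      (fun u hu => mul_nonneg (phif_nonneg hSpos hu.out.le) (Real.exp_nonneg _)) hx
  exact integrableOn_Ioi_of_intervalIntegral_le
    (continuousOn_const.div hPcont fun u hu => (hPpos u hu).ne')
    (fun u hu => one_div_nonneg.2 (hPpos u hu.out.le).le)
    fun x hx => (hbound x hx).trans <|
      add_le_add_left (mul_le_mul_of_nonneg_left (hg_le x hx) (by positivity)) _

/-- Under `c u ≤ Ψ(u)` and `Σ(u) ≤ C u²`,
`(1 + C/c) ∫_{x₀}^x φ e^{Q} ≥ ∫_{x₀}^x du/Ψ(u) − (C/c) φ(x₀) x₀`; hence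
`∫_{x₀}^∞ φ e^{Q} < ∞` implies Grey's condition `∫_{x₀}^∞ du/Ψ(u) < ∞`. -/
theorem stmt8 (Sig Psi : ℝ → ℝ) (x₀ c C : ℝ) (hx₀ : 0 < x₀) (hc : 0 < c) (hC : 0 < C)
    (hScont : ContinuousOn Sig (Ici x₀)) (hPcont : ContinuousOn Psi (Ici x₀))
    (hSpos : ∀ x ≥ x₀, 0 < Sig x) (hPpos : ∀ x ≥ x₀, 0 < Psi x)
    (hPmono : MonotoneOn Psi (Ici x₀))
    (hlow : ∀ u ≥ x₀, c * u ≤ Psi u) (hupp : ∀ u ≥ x₀, Sig u ≤ C * u^2)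
    (hQmono : MonotoneOn (fun u => Qf Sig Psi x₀ u) (Ici x₀))
    (hQ : Tendsto (fun u => Qf Sig Psi x₀ u) atTop atTop)
    (hφ : IntegrableOn (fun x => (1 / Sig x) * Real.exp (-(Qf Sig Psi x₀ x))) (Ioi x₀)) :
    (∀ x ≥ x₀,
      (1 + C/c) * ∫ u in x₀..x, phif Sig Psi x₀ u * Real.exp (Qf Sig Psi x₀ u)
        ≥ (∫ u in x₀..x, 1 / Psi u) - (C/c) * phif Sig Psi x₀ x₀ * x₀) ∧
    (IntegrableOn (fun u => phif Sig Psi x₀ u * Real.exp (Qf Sig Psi x₀ u)) (Ioi x₀) →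
      IntegrableOn (fun u => 1 / Psi u) (Ioi x₀)) :=
  stmt8_general Sig Psi x₀ c C hx₀ hc hC hScont hPcont hSpos hPpos hPmono hlow hupp hQ hφ
end

section
/- Let Ψ : [0,∞) → ℝ be a Lévy–Khintchine function of spectrally positive type that is positive somewhere (non-subordinator case), i.e. Ψ(x) > 0 for some x > 0, and let Σ be a nonzero Lévy–Khintchine collision mechanism. Then S_V(x₀,∞) := ∫_{x₀}^∞ (1/Σ(x)) exp(−∫_{x₀}^x Ψ(u)/Σ(u) du) dx < ∞ for x₀ large enough (equivalently for any x₀ > 0, up to a multiplicative constant). -/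
/-!
`Ψ` and `Σ` are convex on `[0, ∞)` and vanish at `0`, so `Ψ(x)/x` and `Σ(x)/x` are nondecreasing.
Hence `Ψ(u) ≥ κ u` for large `u` with `κ > 0` (as `Ψ` is positive somewhere), and `Σ(u) ≥ β u`
with `β > 0` (a nonzero `Σ` is positive on `(0, ∞)`). Since `e^{-t} - 1 + t ≤ min(t, t²)`, also
`Σ(u) ≤ C u²` for `u ≥ 1`. So `Ψ/Σ ≥ (κ/C)/u`, the exponential factor is `O(x^{-κ/C})`, `1/Σ` is
`O(1/x)`, and the integrand is `O(x^{-1-κ/C})`, which is integrable at infinity.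
-/

open Set MeasureTheory
open Filter Asymptotics

lemma exp_neg_sub_one_add_nonneg (t : ℝ) : 0 ≤ Real.exp (-t) - 1 + t := by
  linarith [Real.add_one_le_exp (-t)]

lemma exp_neg_sub_one_add_pos {t : ℝ} (ht : t ≠ 0) : 0 < Real.exp (-t) - 1 + t := by
  linarith [Real.add_one_lt_exp (neg_ne_zero.2 ht)]

lemma exp_neg_sub_one_add_le_min {t : ℝ} (ht : 0 ≤ t) :
    Real.exp (-t) - 1 + t ≤ min t (t ^ 2) := by
  have hle_one : Real.exp (-t) ≤ 1 := Real.exp_le_one_iff.2 (by linarith)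
  -- `e^{-t} (1 + t) ≤ 1`, so `e^{-t} - 1 + t ≤ t (1 - e^{-t}) ≤ t²`
  have hprod : Real.exp (-t) * (t + 1) ≤ 1 := by
    calc Real.exp (-t) * (t + 1) ≤ Real.exp (-t) * Real.exp t :=
          mul_le_mul_of_nonneg_left (Real.add_one_le_exp t) (Real.exp_pos _).le
      _ = 1 := by rw [← Real.exp_add, neg_add_cancel, Real.exp_zero]
  refine le_min (by linarith) ?_
  nlinarith [mul_le_mul_of_nonneg_left hle_one ht]

lemma min_mul_le_max_mul_min (x : ℝ) {h : ℝ} (hh : 0 ≤ h) :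
    min (x * h) ((x * h) ^ 2) ≤ max x (x ^ 2) * min h (h ^ 2) := by
  rcases le_total h 1 with h1 | h1
  · rw [min_eq_right (by nlinarith : h ^ 2 ≤ h)]
    calc min (x * h) ((x * h) ^ 2) ≤ x ^ 2 * h ^ 2 := (min_le_right _ _).trans_eq (by ring)
      _ ≤ max x (x ^ 2) * h ^ 2 := by gcongr; exact le_max_right _ _
  · rw [min_eq_left (by nlinarith : h ≤ h ^ 2)]
    exact (min_le_left _ _).trans (by gcongr; exact le_max_left _ _)

lemma integrableOn_Ioi_of_lintegral_ofReal_lt_top {μ : Measure ℝ} {f : ℝ → ℝ}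
    (hf : Continuous f) (hf0 : ∀ h, 0 < h → 0 ≤ f h)
    (hfin : ∫⁻ h in Ioi (0:ℝ), ENNReal.ofReal (f h) ∂μ < ⊤) : IntegrableOn f (Ioi 0) μ :=
  (lintegral_ofReal_ne_top_iff_integrable hf.aestronglyMeasurable
    (ae_restrict_of_forall_mem measurableSet_Ioi hf0)).1 hfin.ne

noncomputable section

/-- The Lévy–Khintchine integrand `e^{-xh} - 1 + x h k(h)` with truncation function `k`;
`Ψ` uses `k h = 1_{h ≤ 1}` and `Σ` uses `k = 1`. -/
def lkKernel (k : ℝ → ℝ) (x h : ℝ) : ℝ :=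
  Real.exp (-x * h) - 1 + x * h * k h

def lkExponent (q l : ℝ) (μ : Measure ℝ) (k : ℝ → ℝ) (x : ℝ) : ℝ :=
  q * x ^ 2 + l * x + ∫ h in Ioi 0, lkKernel k x h ∂μ

end

section lkKernel

variable {μ : Measure ℝ} {x : ℝ}

lemma lkKernel_one (x h : ℝ) : lkKernel 1 x h = Real.exp (-(x * h)) - 1 + x * h := by
  simp [lkKernel]

lemma lkKernel_one_nonneg (x h : ℝ) : 0 ≤ lkKernel 1 x h :=
  (lkKernel_one x h).symm ▸ exp_neg_sub_one_add_nonneg _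

lemma lkKernel_one_le {h : ℝ} (hx : 0 ≤ x) (hh : 0 ≤ h) :
    lkKernel 1 x h ≤ max x (x ^ 2) * min h (h ^ 2) :=
  (lkKernel_one x h).symm ▸
    (exp_neg_sub_one_add_le_min (mul_nonneg hx hh)).trans (min_mul_le_max_mul_min x hh)

lemma abs_lkKernel_ite_le {h : ℝ} (hx : 0 ≤ x) (hh : 0 ≤ h) :
    |lkKernel (fun h => if h ≤ 1 then 1 else 0) x h| ≤ max 1 (x ^ 2) * min 1 (h ^ 2) := by
  rcases le_or_gt h 1 with h1 | h1
  · have hker : lkKernel (fun h => if h ≤ 1 then 1 else 0) x h = lkKernel 1 x h := by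
      simp [lkKernel, h1]
    rw [hker, abs_of_nonneg (lkKernel_one_nonneg x h), lkKernel_one,
      min_eq_right (by nlinarith : h ^ 2 ≤ 1)]
    calc _ ≤ (x * h) ^ 2 :=
          (exp_neg_sub_one_add_le_min (mul_nonneg hx hh)).trans (min_le_right _ _)
      _ = x ^ 2 * h ^ 2 := by ring
      _ ≤ max 1 (x ^ 2) * h ^ 2 := by gcongr; exact le_max_right _ _
  · have hexp : Real.exp (-x * h) ≤ 1 := Real.exp_le_one_iff.2 (by nlinarith)
    simp only [lkKernel, if_neg (not_le.2 h1), mul_zero, add_zero,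
      min_eq_left (by nlinarith : (1 : ℝ) ≤ h ^ 2), mul_one]
    rw [abs_le]
    constructor <;> nlinarith [Real.exp_pos (-x * h), le_max_left 1 (x ^ 2)]

lemma convexOn_lkKernel (k : ℝ → ℝ) (h : ℝ) : ConvexOn ℝ univ (fun x => lkKernel k x h) := by
  have hexp : ConvexOn ℝ univ (fun x : ℝ => Real.exp (-x * h)) := by
    simpa [Function.comp_def, mul_comm] using
      convexOn_exp.comp_linearMap (LinearMap.mulLeft ℝ (-h))
  have hlin : ConvexOn ℝ univ (fun x : ℝ => x * (h * k h)) :=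
    (LinearMap.mulRight ℝ (h * k h)).convexOn convex_univ
  refine ((hexp.add hlin).add_const (-1)).congr fun x _ => ?_
  simp only [lkKernel, Pi.add_apply]
  ring

lemma integrableOn_lkKernel_one
    (hμ : ∫⁻ h in Ioi (0:ℝ), ENNReal.ofReal (min h (h ^ 2)) ∂μ < ⊤) (hx : 0 ≤ x) :
    IntegrableOn (lkKernel 1 x) (Ioi 0) μ := by
  have hmin : IntegrableOn (fun h : ℝ => min h (h ^ 2)) (Ioi 0) μ :=
    integrableOn_Ioi_of_lintegral_ofReal_lt_top (by fun_prop)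
      (fun h hh => le_min hh.le (by positivity)) hμ
  have hcont : Continuous (lkKernel 1 x) := by unfold lkKernel; fun_prop
  refine (hmin.const_mul (max x (x ^ 2))).mono' hcont.aestronglyMeasurable
    (ae_restrict_of_forall_mem measurableSet_Ioi fun h hh => ?_)
  rw [Real.norm_of_nonneg (lkKernel_one_nonneg x h)]
  exact lkKernel_one_le hx hh.le

lemma integrableOn_lkKernel_ite
    (hμ : ∫⁻ h in Ioi (0:ℝ), ENNReal.ofReal (min 1 (h ^ 2)) ∂μ < ⊤) (hx : 0 ≤ x) :
    IntegrableOn (lkKernel (fun h => if h ≤ 1 then 1 else 0) x) (Ioi 0) μ := by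
  have hmin : IntegrableOn (fun h : ℝ => min 1 (h ^ 2)) (Ioi 0) μ :=
    integrableOn_Ioi_of_lintegral_ofReal_lt_top (by fun_prop)
      (fun h _ => le_min zero_le_one (by positivity)) hμ
  have hmeas : Measurable (lkKernel (fun h => if h ≤ 1 then 1 else 0) x) := by
    have : Measurable fun h : ℝ => if h ≤ 1 then (1 : ℝ) else 0 :=
      measurable_const.ite measurableSet_Iic measurable_const
    unfold lkKernel; fun_prop
  exact (hmin.const_mul (max 1 (x ^ 2))).mono' hmeas.aestronglyMeasurable
    (ae_restrict_of_forall_mem measurableSet_Ioi fun h hh => abs_lkKernel_ite_le hx hh.le)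

end lkKernel

section lkExponent

variable {q l x : ℝ} {μ : Measure ℝ} {k : ℝ → ℝ}

@[simp] lemma lkExponent_zero : lkExponent q l μ k 0 = 0 := by
  simp [lkExponent, lkKernel]

lemma convexOn_lkExponent (hq : 0 ≤ q)
    (hint : ∀ x, 0 ≤ x → IntegrableOn (lkKernel k x) (Ioi 0) μ) :
    ConvexOn ℝ (Ici 0) (lkExponent q l μ k) := by
  have hquad : ConvexOn ℝ (Ici 0) (fun x : ℝ => q * x ^ 2) := (convexOn_pow 2).smul hq
  have hlin : ConvexOn ℝ (Ici 0) (fun x : ℝ => l * x) :=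
    (LinearMap.mulLeft ℝ l).convexOn (convex_Ici 0)
  have hjump : ConvexOn ℝ (Ici 0) (fun x => ∫ h in Ioi 0, lkKernel k x h ∂μ) :=
    integral_convexOn_of_integrand_ae (convex_Ici 0)
      (ae_of_all _ fun h => (convexOn_lkKernel k h).subset (subset_univ _) (convex_Ici 0)) hint
  exact (hquad.add hlin).add hjump

lemma lkExponent_one_nonneg (hq : 0 ≤ q) (hl : 0 ≤ l) (hx : 0 ≤ x) :
    0 ≤ lkExponent q l μ 1 x :=
  add_nonneg (by positivity)
    (setIntegral_nonneg measurableSet_Ioi fun h _ => lkKernel_one_nonneg x h)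

/-- A zero at some `x > 0` forces `q = l = 0` and `μ (Ioi 0) = 0`, as the kernel is positive
there. -/
lemma lkExponent_one_eq_zero_of_eq_zero (hq : 0 ≤ q) (hl : 0 ≤ l)
    (hint : IntegrableOn (lkKernel 1 x) (Ioi 0) μ) (hx : 0 < x)
    (h0 : lkExponent q l μ 1 x = 0) (y : ℝ) : lkExponent q l μ 1 y = 0 := by
  have hI : 0 ≤ ∫ h in Ioi 0, lkKernel 1 x h ∂μ :=
    setIntegral_nonneg measurableSet_Ioi fun h _ => lkKernel_one_nonneg x h
  have hqx : 0 ≤ q * x ^ 2 := by positivity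
  have hlx : 0 ≤ l * x := by positivity
  unfold lkExponent at h0
  have hq0 : q = 0 := by nlinarith [pow_pos hx 2]
  have hl0 : l = 0 := by nlinarith
  have hI0 : ∫ h in Ioi 0, lkKernel 1 x h ∂μ = 0 := by linarith
  have hae := (integral_eq_zero_iff_of_nonneg (lkKernel_one_nonneg x) hint).1 hI0
  have hfalse : ∀ᵐ h ∂μ.restrict (Ioi 0), False := by
    filter_upwards [hae, ae_restrict_mem measurableSet_Ioi] with h hzero hh
    rw [Pi.zero_apply, lkKernel_one] at hzero
    exact (exp_neg_sub_one_add_pos (mul_pos hx hh).ne').ne' hzero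
  have hμ : μ.restrict (Ioi 0) = 0 := ae_eq_bot.1 (eventually_false_iff_eq_bot.1 hfalse)
  simp [lkExponent, hq0, hl0, hμ]

lemma lkExponent_one_pos (hq : 0 ≤ q) (hl : 0 ≤ l)
    (hint : ∀ x, 0 ≤ x → IntegrableOn (lkKernel 1 x) (Ioi 0) μ)
    (hne : ∃ y > 0, lkExponent q l μ 1 y ≠ 0) (hx : 0 < x) : 0 < lkExponent q l μ 1 x := by
  obtain ⟨y, -, hy⟩ := hne
  exact (lkExponent_one_nonneg hq hl hx.le).lt_of_ne' fun h0 =>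
    hy (lkExponent_one_eq_zero_of_eq_zero hq hl (hint x hx.le) hx h0 y)

lemma lkExponent_one_le_mul_sq (hl : 0 ≤ l)
    (hmin : IntegrableOn (fun h : ℝ => min h (h ^ 2)) (Ioi 0) μ)
    (hint : IntegrableOn (lkKernel 1 x) (Ioi 0) μ) (hx : 1 ≤ x) :
    lkExponent q l μ 1 x ≤ (q + l + ∫ h in Ioi 0, min h (h ^ 2) ∂μ) * x ^ 2 := by
  have hmax : max x (x ^ 2) = x ^ 2 := max_eq_right (by nlinarith)
  have hI : ∫ h in Ioi 0, lkKernel 1 x h ∂μ ≤ x ^ 2 * ∫ h in Ioi 0, min h (h ^ 2) ∂μ := by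
    rw [← integral_const_mul]
    refine setIntegral_mono_on hint (hmin.const_mul _) measurableSet_Ioi fun h hh => ?_
    rw [← hmax]
    exact lkKernel_one_le (by linarith) hh.le
  have hlx : l * x ≤ l * x ^ 2 := mul_le_mul_of_nonneg_left (by nlinarith) hl
  unfold lkExponent
  nlinarith

end lkExponent

lemma ConvexOn.div_mul_le_of_map_zero {f : ℝ → ℝ} (hf : ConvexOn ℝ (Ici 0) f) (h0 : f 0 = 0)
    {x₁ x : ℝ} (hx₁ : 0 < x₁) (hx : x₁ ≤ x) : f x₁ / x₁ * x ≤ f x := by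
  have hx0 : 0 < x := hx₁.trans_le hx
  have := hf.secant_mono (a := 0) self_mem_Ici hx₁.le hx0.le hx₁.ne' hx0.ne' hx
  simp only [h0, sub_zero] at this
  rwa [le_div_iff₀ hx0] at this

lemma ContinuousOn.intervalIntegrable_of_Ioi {ρ : ℝ → ℝ} {a y z : ℝ}
    (hρ : ContinuousOn ρ (Ioi a)) (hy : a < y) (hz : a < z) : IntervalIntegrable ρ volume y z :=
  (hρ.mono fun _ hu => (lt_min hy hz).trans_le hu.1).intervalIntegrable

lemma continuousOn_primitive_of_continuousOn_Ioi {ρ : ℝ → ℝ} {a x₀ : ℝ}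
    (hρ : ContinuousOn ρ (Ioi a)) (hx₀ : a < x₀) :
    ContinuousOn (fun x => ∫ u in x₀..x, ρ u) (Ioi a) := fun y hy =>
  (intervalIntegral.integral_hasDerivAt_right (hρ.intervalIntegrable_of_Ioi hx₀ hy)
    (hρ.stronglyMeasurableAtFilter isOpen_Ioi y hy)
    (hρ.continuousAt (isOpen_Ioi.mem_nhds hy))).continuousAt.continuousWithinAt

lemma exp_neg_integral_isBigO_rpow {ρ : ℝ → ℝ} {x₀ r : ℝ} (hρ : ContinuousOn ρ (Ioi 0))
    (hx₀ : 0 < x₀) (hρr : ∀ᶠ u in atTop, r / u ≤ ρ u) :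
    (fun x => Real.exp (-∫ u in x₀..x, ρ u)) =O[atTop] fun x => x ^ (-r) := by
  obtain ⟨X, hX⟩ := (hρr.and (eventually_ge_atTop x₀)).exists_forall_of_atTop
  have hXpos : 0 < X := hx₀.trans_le (hX X le_rfl).2
  set K := ∫ u in x₀..X, ρ u
  refine IsBigO.of_bound (Real.exp (-K) * X ^ r) ?_
  filter_upwards [eventually_ge_atTop X] with x hx
  have hx0 : 0 < x := hXpos.trans_le hx
  have hlog : r * Real.log (x / X) ≤ ∫ u in X..x, ρ u := by
    have hinv : IntervalIntegrable (fun u : ℝ => r / u) volume X x :=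
      (continuousOn_const.div continuousOn_id fun _ hu => ne_of_gt hu).intervalIntegrable_of_Ioi
        hXpos hx0
    calc r * Real.log (x / X) = ∫ u in X..x, r / u := by
          simp_rw [div_eq_mul_inv r, intervalIntegral.integral_const_mul,
            integral_inv_of_pos hXpos hx0]
      _ ≤ ∫ u in X..x, ρ u :=
          intervalIntegral.integral_mono_on hx hinv (hρ.intervalIntegrable_of_Ioi hXpos hx0)
            fun u hu => (hX u hu.1).1
  have hsplit : ∫ u in x₀..x, ρ u = K + ∫ u in X..x, ρ u :=
    (intervalIntegral.integral_add_adjacent_intervals (hρ.intervalIntegrable_of_Ioi hx₀ hXpos)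
      (hρ.intervalIntegrable_of_Ioi hXpos hx0)).symm
  rw [Real.norm_of_nonneg (Real.exp_nonneg _), Real.norm_of_nonneg (Real.rpow_nonneg hx0.le _),
    hsplit, Real.rpow_def_of_pos hXpos, Real.rpow_def_of_pos hx0, ← Real.exp_add, ← Real.exp_add,
    Real.exp_le_exp]
  rw [Real.log_div hx0.ne' hXpos.ne'] at hlog
  linarith

lemma integrableOn_Ioi_mul_exp_neg_integral {w ρ : ℝ → ℝ} {x₀ r : ℝ} (hx₀ : 0 < x₀)
    (hw : ContinuousOn w (Ioi 0)) (hρ : ContinuousOn ρ (Ioi 0))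
    (hwO : w =O[atTop] fun x => x⁻¹) (hr : 0 < r) (hρr : ∀ᶠ u in atTop, r / u ≤ ρ u) :
    IntegrableOn (fun x => w x * Real.exp (-∫ u in x₀..x, ρ u)) (Ioi x₀) := by
  have hcont : ContinuousOn (fun x => w x * Real.exp (-∫ u in x₀..x, ρ u)) (Ici x₀) :=
    (hw.mul (continuousOn_primitive_of_continuousOn_Ioi hρ hx₀).neg.rexp).mono
      fun _ hx => hx₀.trans_le hx
  have hO : (fun x => w x * Real.exp (-∫ u in x₀..x, ρ u)) =O[atTop] fun x => x ^ (-1 - r) := by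
    refine (hwO.mul (exp_neg_integral_isBigO_rpow hρ hx₀ hρr)).congr' EventuallyEq.rfl ?_
    filter_upwards [eventually_gt_atTop 0] with x hx
    rw [sub_eq_add_neg, Real.rpow_add hx, Real.rpow_neg_one]
  exact ((hcont.locallyIntegrableOn measurableSet_Ici).integrableOn_of_isBigO_atTop hO
    (integrableAtFilter_rpow_atTop_iff.2 (by linarith))).mono_set Ioi_subset_Ici_self

lemma integrableOn_Ioi_inv_mul_exp_neg_integral_div {P S : ℝ → ℝ} {x₀ κ β C : ℝ}
    (hx₀ : 0 < x₀) (hP : ContinuousOn P (Ioi 0)) (hS : ContinuousOn S (Ioi 0))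
    (hS0 : ∀ x > 0, S x ≠ 0) (hκ : 0 < κ) (hβ : 0 < β)
    (hPlow : ∀ᶠ x in atTop, κ * x ≤ P x) (hSlow : ∀ᶠ x in atTop, β * x ≤ S x)
    (hSup : ∀ᶠ x in atTop, S x ≤ C * x ^ 2) :
    IntegrableOn (fun x => 1 / S x * Real.exp (-∫ u in x₀..x, P u / S u)) (Ioi x₀) := by
  obtain ⟨y, hy0, hyS⟩ := ((eventually_gt_atTop 0).and (hSlow.and hSup)).exists
  have hC : 0 < C :=
    pos_of_mul_pos_left ((mul_pos hβ hy0).trans_le (hyS.1.trans hyS.2)) (sq_nonneg y)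
  refine integrableOn_Ioi_mul_exp_neg_integral hx₀ (continuousOn_const.div hS hS0)
    (hP.div hS hS0) ?_ (div_pos hκ hC) ?_
  · refine IsBigO.of_bound β⁻¹ ?_
    filter_upwards [eventually_gt_atTop 0, hSlow] with x hx hxS
    have hSx : 0 < S x := (mul_pos hβ hx).trans_le hxS
    rw [Real.norm_of_nonneg (by positivity), norm_inv, Real.norm_of_nonneg hx.le, one_div,
      ← mul_inv]
    exact inv_anti₀ (by positivity) hxS
  · filter_upwards [eventually_gt_atTop 0, hPlow, hSlow, hSup] with x hx hxP hxSl hxSu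
    have hSx : 0 < S x := (mul_pos hβ hx).trans_le hxSl
    rw [div_le_div_iff₀ hx hSx]
    calc κ / C * S x ≤ κ / C * (C * x ^ 2) := by gcongr
      _ = κ * x * x := by field_simp
      _ ≤ P x * x := by gcongr

theorem stmt19_general (σ b a c : ℝ) (hc : 0 ≤ c)
    (π η : Measure ℝ)
    (hπ : ∫⁻ h in Ioi (0:ℝ), ENNReal.ofReal (min 1 (h^2)) ∂π < ⊤)
    (hη : ∫⁻ h in Ioi (0:ℝ), ENNReal.ofReal (min h (h^2)) ∂η < ⊤)
    (Psi Sig : ℝ → ℝ)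
    (hPsi : ∀ x, Psi x = σ^2/2 * x^2 - b*x +
      ∫ h in Ioi (0:ℝ), (Real.exp (-x*h) - 1 + x*h * (if h ≤ 1 then 1 else 0)) ∂π)
    (hSig : ∀ x, Sig x = a^2/2 * x^2 + c/2 * x +
      ∫ h in Ioi (0:ℝ), (Real.exp (-x*h) - 1 + x*h) ∂η)
    (hSne : ∃ x > (0:ℝ), Sig x ≠ 0)
    (hPpos : ∃ x > (0:ℝ), 0 < Psi x) :
    ∀ x₀ > (0:ℝ),
      IntegrableOn
        (fun x => (1 / Sig x) * Real.exp (-(∫ u in x₀..x, Psi u / Sig u)))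
        (Ioi x₀) := by
  intro x₀ hx₀
  have hPsiEq : Psi = lkExponent (σ^2/2) (-b) π (fun h => if h ≤ 1 then 1 else 0) := by
    funext x; simp [hPsi, lkExponent, lkKernel, sub_eq_add_neg]
  have hSigEq : Sig = lkExponent (a^2/2) (c/2) η 1 := by
    funext x; simp [hSig, lkExponent, lkKernel]
  have hq : 0 ≤ a^2/2 := by positivity
  have hl : 0 ≤ c/2 := by positivity
  have hSigInt : ∀ x, 0 ≤ x → IntegrableOn (lkKernel 1 x) (Ioi 0) η :=
    fun x hx => integrableOn_lkKernel_one hη hx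
  have hPsiConv : ConvexOn ℝ (Ici 0) Psi :=
    hPsiEq ▸ convexOn_lkExponent (by positivity) fun x hx => integrableOn_lkKernel_ite hπ hx
  have hSigConv : ConvexOn ℝ (Ici 0) Sig := hSigEq ▸ convexOn_lkExponent hq hSigInt
  have hSigPos : ∀ x > 0, 0 < Sig x :=
    fun x hx => hSigEq ▸ lkExponent_one_pos hq hl hSigInt (hSigEq ▸ hSne) hx
  have hSigSq : ∀ x ≥ 1, Sig x ≤ (a^2/2 + c/2 + ∫ h in Ioi 0, min h (h ^ 2) ∂η) * x ^ 2 :=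
    fun x hx => hSigEq ▸ lkExponent_one_le_mul_sq hl
      (integrableOn_Ioi_of_lintegral_ofReal_lt_top (by fun_prop)
        (fun h hh => le_min hh.le (by positivity)) hη) (hSigInt x (by linarith)) hx
  obtain ⟨x₁, hx₁, hPsix₁⟩ := hPpos
  refine integrableOn_Ioi_inv_mul_exp_neg_integral_div hx₀
    ((hPsiConv.subset Ioi_subset_Ici_self (convex_Ioi 0)).continuousOn isOpen_Ioi)
    ((hSigConv.subset Ioi_subset_Ici_self (convex_Ioi 0)).continuousOn isOpen_Ioi)
    (fun x hx => (hSigPos x hx).ne') (div_pos hPsix₁ hx₁) (div_pos (hSigPos 1 one_pos) one_pos)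
    ?_ ?_ ((eventually_ge_atTop 1).mono hSigSq)
  · filter_upwards [eventually_ge_atTop x₁] with x hx
    exact hPsiConv.div_mul_le_of_map_zero (hPsiEq ▸ lkExponent_zero) hx₁ hx
  · filter_upwards [eventually_ge_atTop 1] with x hx
    exact hSigConv.div_mul_le_of_map_zero (hSigEq ▸ lkExponent_zero) one_pos hx

/-- In the non-subordinator case (`Ψ(x) > 0` for some `x > 0`), with `Σ` a nonzero
Lévy–Khintchine collision mechanism, the scale measure tail
`S_V(x₀,∞) = ∫_{x₀}^∞ (1/Σ(x)) exp(−∫_{x₀}^x Ψ/Σ) dx` is finite for every `x₀ > 0`. -/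
theorem stmt19 (σ b a c : ℝ) (hσ : 0 ≤ σ) (ha : 0 ≤ a) (hc : 0 ≤ c)
    (π η : Measure ℝ)
    (hπ : ∫⁻ h in Ioi (0:ℝ), ENNReal.ofReal (min 1 (h^2)) ∂π < ⊤)
    (hη : ∫⁻ h in Ioi (0:ℝ), ENNReal.ofReal (min h (h^2)) ∂η < ⊤)
    (Psi Sig : ℝ → ℝ)
    (hPsi : ∀ x, Psi x = σ^2/2 * x^2 - b*x +
      ∫ h in Ioi (0:ℝ), (Real.exp (-x*h) - 1 + x*h * (if h ≤ 1 then 1 else 0)) ∂π)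
    (hSig : ∀ x, Sig x = a^2/2 * x^2 + c/2 * x +
      ∫ h in Ioi (0:ℝ), (Real.exp (-x*h) - 1 + x*h) ∂η)
    (hSne : ∃ x > (0:ℝ), Sig x ≠ 0)
    (hPpos : ∃ x > (0:ℝ), 0 < Psi x) :
    ∀ x₀ > (0:ℝ),
      IntegrableOn
        (fun x => (1 / Sig x) * Real.exp (-(∫ u in x₀..x, Psi u / Sig u)))
        (Ioi x₀) :=
  stmt19_general σ b a c hc π η hπ hη Psi Sig hPsi hSig hSne hPpos
end
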